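/- If s ∈ ℂ satisfies Re(s) > 0, Q(s) = 0 and s ≠ γ̃_M, then Re(s) < γ̃_M. In particular every zero of Q in the right half-plane has real part at most γ̃_M. -/

import Mathlib

/-- `Q(s) = 1 - 2∑_{k≥1} exp(-s√(k(k+2))/2)`. -/
noncomputable def Qfun (s : ℂ) : ℂ :=
  1 - 2 * ∑' k : ℕ,
    Complex.exp (-(s * (Real.sqrt (((k : ℝ) + 1) * (((k : ℝ) + 1) + 2)) : ℂ) / 2))

/-!
Write `λ k = √((k + 1)(k + 3)) / 2`, so that `Q(s) = 1 - 2 ∑ₖ exp(-s λ k)`. At a zero `s` of `Q`,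
`1/2 = Re ∑ₖ exp(-s λ k) ≤ ∑ₖ exp(-(Re s) λ k)`, and the right-hand side is strictly decreasing in
`Re s` and equals `1/2` at `γ̃_M`; hence `Re s ≤ γ̃_M`. If `Re s = γ̃_M`, the inequality is an equality,
which forces every term `exp(-s λ k)` to be a positive real, i.e. `(Im s) λ k ∈ 2πℤ` for all `k`.
Since `λ 1 / λ 0 = √(8/3)` is irrational, this gives `Im s = 0`, that is `s = γ̃_M`.
-/

section DirichletSeries

variable {a : ℕ → ℝ}

lemma summable_exp_neg_mul_of_mul_le {c σ : ℝ} (hc : 0 < c) (ha : ∀ k : ℕ, c * k ≤ a k)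
    (hσ : 0 < σ) : Summable fun k => Real.exp (-(σ * a k)) := by
  refine (Real.summable_exp_nat_mul_iff.mpr (neg_neg_of_pos (mul_pos hσ hc))).of_nonneg_of_le
    (fun _ => (Real.exp_pos _).le) fun k => Real.exp_le_exp.mpr ?_
  nlinarith [mul_le_mul_of_nonneg_left (ha k) hσ.le]

lemma tsum_exp_neg_mul_lt_of_lt {σ τ : ℝ} (hpos : ∀ k, 0 < a k) (hστ : σ < τ)
    (hσ : Summable fun k => Real.exp (-(σ * a k))) (hτ : Summable fun k => Real.exp (-(τ * a k))) :
    ∑' k, Real.exp (-(τ * a k)) < ∑' k, Real.exp (-(σ * a k)) :=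
  hτ.tsum_lt_tsum (i := 0) (fun k => Real.exp_le_exp.mpr (by nlinarith [hpos k]))
    (Real.exp_lt_exp.mpr (by nlinarith [hpos 0])) hσ

lemma norm_exp_neg_mul_ofReal (s : ℂ) (x : ℝ) :
    ‖Complex.exp (-(s * x))‖ = Real.exp (-(s.re * x)) := by
  simp [Complex.norm_exp]

lemma re_exp_eq_norm_exp_iff (z : ℂ) : (Complex.exp z).re = ‖Complex.exp z‖ ↔ Real.cos z.im = 1 := by
  rw [Complex.exp_re, Complex.norm_exp, mul_eq_left₀ (Real.exp_pos _).ne']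

lemma re_tsum_lt_tsum_norm {ι : Type*} {f : ι → ℂ} (hf : Summable fun i => ‖f i‖) {i : ι}
    (hi : (f i).re < ‖f i‖) : (∑' i, f i).re < ∑' i, ‖f i‖ := by
  rw [Complex.re_tsum hf.of_norm]
  exact (Complex.reCLM.summable hf.of_norm).tsum_lt_tsum (fun j => Complex.re_le_norm (f j)) hi hf

theorem re_lt_or_cos_eq_one_of_re_tsum_eq {s : ℂ} {γ : ℝ} (hpos : ∀ k, 0 < a k)
    (hs : Summable fun k => Real.exp (-(s.re * a k)))
    (hγ : Summable fun k => Real.exp (-(γ * a k)))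
    (h : (∑' k, Complex.exp (-(s * a k))).re = ∑' k, Real.exp (-(γ * a k))) :
    s.re < γ ∨ s.re = γ ∧ ∀ k, Real.cos (s.im * a k) = 1 := by
  have hnorm : ∀ k, ‖Complex.exp (-(s * a k))‖ = Real.exp (-(s.re * a k)) := fun k =>
    norm_exp_neg_mul_ofReal s (a k)
  have hs' : Summable fun k => ‖Complex.exp (-(s * a k))‖ := by simpa only [hnorm] using hs
  rcases lt_trichotomy s.re γ with hlt | hre | hgt
  · exact Or.inl hlt
  · refine Or.inr ⟨hre, fun k => ?_⟩
    by_contra hk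
    have hk' : (Complex.exp (-(s * a k))).re < ‖Complex.exp (-(s * a k))‖ := by
      refine (Complex.re_le_norm _).lt_of_ne fun hk_eq => hk ?_
      simpa using (re_exp_eq_norm_exp_iff _).mp hk_eq
    have hlt := re_tsum_lt_tsum_norm hs' hk'
    simp only [hnorm, hre] at hlt
    exact hlt.ne h
  · refine absurd h (ne_of_lt ?_)
    calc (∑' k, Complex.exp (-(s * a k))).re
        ≤ ‖∑' k, Complex.exp (-(s * a k))‖ := Complex.re_le_norm _
      _ ≤ ∑' k, ‖Complex.exp (-(s * a k))‖ := norm_tsum_le_tsum_norm hs'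
      _ = ∑' k, Real.exp (-(s.re * a k)) := by simp only [hnorm]
      _ < ∑' k, Real.exp (-(γ * a k)) := tsum_exp_neg_mul_lt_of_lt hpos hgt hγ hs

end DirichletSeries

lemma eq_zero_of_cos_mul_eq_one_of_irrational_div {t x y : ℝ} (hxy : Irrational (x / y))
    (hx : Real.cos (t * x) = 1) (hy : Real.cos (t * y) = 1) : t = 0 := by
  by_contra ht
  obtain ⟨m, hm⟩ := (Real.cos_eq_one_iff _).mp hx
  obtain ⟨n, hn⟩ := (Real.cos_eq_one_iff _).mp hy
  have hy0 : y ≠ 0 := by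
    rintro rfl
    simp at hxy
  have hn0 : (n : ℝ) ≠ 0 := by
    intro h
    rw [h, zero_mul] at hn
    exact mul_ne_zero ht hy0 hn.symm
  refine hxy ⟨m / n, ?_⟩
  have hmn : t * (m * y) = t * (x * n) := by
    linear_combination (m : ℝ) * hn.symm - (n : ℝ) * hm.symm
  push_cast
  rw [div_eq_div_iff hn0 hy0]
  exact mul_left_cancel₀ ht hmn

noncomputable def rate (k : ℕ) : ℝ := Real.sqrt (((k : ℝ) + 1) * (((k : ℝ) + 1) + 2)) / 2

lemma rate_pos (k : ℕ) : 0 < rate k := by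
  unfold rate
  positivity

lemma half_mul_le_rate (k : ℕ) : 1 / 2 * (k : ℝ) ≤ rate k := by
  have hk : (k : ℝ) ≤ Real.sqrt (((k : ℝ) + 1) * (((k : ℝ) + 1) + 2)) :=
    Real.le_sqrt_of_sq_le (by nlinarith)
  unfold rate
  linarith

lemma irrational_rate_one_div_rate_zero : Irrational (rate 1 / rate 0) := by
  have h : rate 1 / rate 0 = Real.sqrt (8 / 3) := by
    rw [Real.sqrt_div' _ (by norm_num)]
    norm_num [rate, div_div_div_cancel_right₀]
  rw [h]
  norm_num

lemma Qfun_eq_one_sub_tsum (s : ℂ) : Qfun s = 1 - 2 * ∑' k, Complex.exp (-(s * rate k)) := by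
  simp only [Qfun, rate, Complex.ofReal_div, mul_div_assoc]
  norm_num

/-- if `γ̃_M` is the unique positive real with
`∑_{k≥1} exp(-γ̃_M√(k(k+2))/2) = 1/2` and `s` is a zero of `Q` in the right half-plane
with `s ≠ γ̃_M`, then `Re(s) < γ̃_M`. In particular every zero of `Q` in the right
half-plane has real part at most `γ̃_M`. -/
theorem stmt_13 (γ : ℝ) (hγpos : 0 < γ)
    (hγ : ∑' k : ℕ,
        Real.exp (-(γ * Real.sqrt (((k : ℝ) + 1) * (((k : ℝ) + 1) + 2)) / 2)) = 1 / 2)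
    (s : ℂ) (hs : 0 < s.re) (hQ : Qfun s = 0) (hne : s ≠ (γ : ℂ)) :
    s.re < γ := by
  have hsum : ∀ {σ : ℝ}, 0 < σ → Summable fun k => Real.exp (-(σ * rate k)) :=
    summable_exp_neg_mul_of_mul_le one_half_pos half_mul_le_rate
  have hsQ : ∑' k, Complex.exp (-(s * rate k)) = 1 / 2 := by
    rw [Qfun_eq_one_sub_tsum] at hQ
    linear_combination (-1 / 2 : ℂ) * hQ
  have hγQ : ∑' k, Real.exp (-(γ * rate k)) = 1 / 2 := by
    simpa only [rate, mul_div_assoc] using hγ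
  rcases re_lt_or_cos_eq_one_of_re_tsum_eq rate_pos (hsum hs) (hsum hγpos)
      (by rw [hsQ, hγQ]; norm_num) with hlt | ⟨hre, hcos⟩
  · exact hlt
  · have him : s.im = 0 :=
      eq_zero_of_cos_mul_eq_one_of_irrational_div irrational_rate_one_div_rate_zero (hcos 1) (hcos 0)
    exact absurd (Complex.ext hre (by simpa using him)) hne
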